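/- arXiv:2203.09019 — 3 statements merged into one kernel-verified Lean document; each statement's English description precedes it below -/
import Mathlib

section
/- A splinter ring S is integrally closed in its total ring of fractions. -/
universe u

open TensorProduct in
/-- A ring map is pure (universally injective) if for every module `M` over the source,
the map `M → M ⊗ S'` is injective. -/
def RingHom.IsPure {S S' : Type u} [CommRing S] [CommRing S'] (f : S →+* S') : Prop :=
  ∀ (M : Type u) (_ : AddCommGroup M) (_ : Module S M),
    letI := f.toAlgebra
    Function.Injective (fun m : M => (m ⊗ₜ[S] (1 : S') : M ⊗[S] S'))

/-- A commutative ring `S` is a splinter if every finite ring map `S → T` inducing a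
surjective map on prime spectra is pure (universally injective). -/
def IsSplinter (S : Type u) [CommRing S] : Prop :=
  ∀ (T : Type u) (_ : CommRing T) (f : S →+* T), f.Finite →
    Function.Surjective (PrimeSpectrum.comap f) → f.IsPure

set_option maxHeartbeats 1000000 in
set_option synthInstance.maxHeartbeats 400000 in
theorem isIntegrallyClosedIn_totalFractionRing_of_isSplinter
    (S : Type u) [CommRing S] (hS : IsSplinter S) :
    IsIntegrallyClosedIn S (FractionRing S) := by
  rw [isIntegrallyClosedIn_iff]
  refine ⟨IsFractionRing.injective S (FractionRing S), ?_⟩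
  intro x hx
  -- Let T = S[x] inside the total fraction ring.
  set T : Subalgebra S (FractionRing S) := Algebra.adjoin S {x} with hT
  have hxT : x ∈ T := Algebra.subset_adjoin rfl
  have hfin : Module.Finite S T :=
    ⟨(Submodule.fg_top _).mpr hx.fg_adjoin_singleton⟩
  set f : S →+* T := algebraMap S T with hf
  have halg : f.toAlgebra = (inferInstance : Algebra S T) :=
    Algebra.algebra_ext _ _ fun r => rfl
  have hffin : f.Finite := by
    unfold RingHom.Finite
    rw [halg]
    exact hfin
  have hinj : Function.Injective f := by
    intro a b hab
    apply IsFractionRing.injective S (FractionRing S)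
    rw [IsScalarTower.algebraMap_apply S T (FractionRing S),
      IsScalarTower.algebraMap_apply S T (FractionRing S)]
    exact congrArg (algebraMap T (FractionRing S)) hab
  have hint : Algebra.IsIntegral S T := Algebra.IsIntegral.of_finite S T
  have hsurj : Function.Surjective (PrimeSpectrum.comap f) := by
    intro p
    have hker : RingHom.ker (algebraMap S T) ≤ p.asIdeal := by
      rw [(RingHom.injective_iff_ker_eq_bot _).mp hinj]
      exact bot_le
    obtain ⟨Q, -, hQprime, hQ⟩ :=
      Ideal.exists_ideal_over_prime_of_isIntegral p.asIdeal (⊥ : Ideal T) hker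
    exact ⟨⟨Q, hQprime⟩, PrimeSpectrum.ext hQ⟩
  have hpure := hS T inferInstance f hffin hsurj
  -- Write x = a / b with b a nonzerodivisor.
  obtain ⟨⟨a, b⟩, hab⟩ := IsLocalization.surj (nonZeroDivisors S) x
  -- apply purity to S / (b)
  have hkey := hpure (S ⧸ Ideal.span {(b : S)}) inferInstance inferInstance
  rw [halg] at hkey
  set t : T := ⟨x, hxT⟩ with ht
  have hbt : f (b : S) * t = f a := by
    apply Subtype.ext
    have h1 : ((f (b : S) : T) : FractionRing S) = algebraMap S (FractionRing S) (b : S) := rfl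
    have h2 : ((f a : T) : FractionRing S) = algebraMap S (FractionRing S) a := rfl
    show ((f (b : S) : T) : FractionRing S) * x = ((f a : T) : FractionRing S)
    rw [h1, h2, mul_comm]
    exact hab
  have hqa : (a : S) • (Ideal.Quotient.mk (Ideal.span {(b : S)}) 1)
      = Ideal.Quotient.mk (Ideal.span {(b : S)}) a := by
    show a • Submodule.Quotient.mk (1 : S)
        = (Submodule.Quotient.mk a : S ⧸ Ideal.span {(b : S)})
    rw [← Submodule.Quotient.mk_smul, smul_eq_mul, mul_one]
  have hqb : ((b : S)) • (Ideal.Quotient.mk (Ideal.span {(b : S)}) 1)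
      = Ideal.Quotient.mk (Ideal.span {(b : S)}) (b : S) := by
    show (b : S) • Submodule.Quotient.mk (1 : S)
        = (Submodule.Quotient.mk (b : S) : S ⧸ Ideal.span {(b : S)})
    rw [← Submodule.Quotient.mk_smul, smul_eq_mul, mul_one]
  have hzero :
      (fun m : S ⧸ Ideal.span {(b : S)} =>
        (m ⊗ₜ[S] (1 : T) : TensorProduct S (S ⧸ Ideal.span {(b : S)}) T))
        (Ideal.Quotient.mk _ a) =
      (fun m : S ⧸ Ideal.span {(b : S)} =>
        (m ⊗ₜ[S] (1 : T) : TensorProduct S (S ⧸ Ideal.span {(b : S)}) T)) 0 := by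
    simp only
    rw [← hqa, TensorProduct.smul_tmul]
    have hsa : a • (1 : T) = f a := by
      rw [Algebra.smul_def, mul_one]
    rw [hsa, ← hbt]
    have hsb : f (b : S) * t = (b : S) • t := by
      rw [Algebra.smul_def]
    rw [hsb, ← TensorProduct.smul_tmul, hqb]
    have hb0 : (Ideal.Quotient.mk (Ideal.span {(b : S)}) (b : S)) = 0 := by
      rw [Ideal.Quotient.eq_zero_iff_mem]
      exact Ideal.mem_span_singleton_self _
    rw [hb0, TensorProduct.zero_tmul, TensorProduct.zero_tmul]
  have hmem := hkey hzero
  rw [Ideal.Quotient.eq_zero_iff_mem, Ideal.mem_span_singleton] at hmem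
  obtain ⟨c, hc⟩ := hmem
  refine ⟨c, ?_⟩
  have hu : IsUnit (algebraMap S (FractionRing S) (b : S)) :=
    IsLocalization.map_units (FractionRing S) b
  apply hu.mul_right_cancel
  rw [← map_mul, mul_comm c, ← hc]
  exact hab.symm
end

section
/- Let S be an integral domain containing the field ℚ of rational numbers. Then S is a splinter if and only if S is integrally closed in its fraction field. -/
set_option maxHeartbeats 1000000
set_option synthInstance.maxHeartbeats 400000

universe u

open TensorProduct

/-- A pure ring map detects ideal membership of the form `f a ∈ f b * T`. -/
lemma pure_key {S T : Type u} [CommRing S] [CommRing T] (f : S →+* T)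
    (h : f.IsPure) (a b : S) (y : T) (hy : f a = f b * y) : a ∈ Ideal.span {b} := by
  letI := f.toAlgebra
  set I : Ideal S := Ideal.span {b} with hI
  have hp := h (S ⧸ I) inferInstance inferInstance
  have hmk : ∀ c : S, Ideal.Quotient.mk I c = c • (1 : S ⧸ I) := by
    intro c
    have := (Ideal.Quotient.mkₐ S I).toLinearMap.map_smul c 1
    simpa [smul_eq_mul] using this
  have hsmulT : ∀ (c : S) (t : T), c • t = f c * t := fun c t => rfl
  have e1 : (Ideal.Quotient.mk I a) ⊗ₜ[S] (1 : T) = (0 : (S ⧸ I) ⊗[S] T) := by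
    rw [hmk a, TensorProduct.smul_tmul, hsmulT, mul_one, hy, ← hsmulT,
      ← TensorProduct.smul_tmul, ← hmk b,
      Ideal.Quotient.eq_zero_iff_mem.mpr (Ideal.mem_span_singleton_self b),
      TensorProduct.zero_tmul]
  have : Ideal.Quotient.mk I a = 0 := by
    apply hp
    show (Ideal.Quotient.mk I a) ⊗ₜ[S] (1 : T) = (0 : S ⧸ I) ⊗ₜ[S] (1 : T)
    rw [e1, TensorProduct.zero_tmul]
  exact Ideal.Quotient.eq_zero_iff_mem.mp this

/-- A ring map admitting a linear retraction sending `1` to `1` is pure. -/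
lemma isPure_of_retraction {S T : Type u} [CommRing S] [CommRing T] (f : S →+* T)
    (r : letI := f.toAlgebra; T →ₗ[S] S)
    (hr : letI := f.toAlgebra; r 1 = 1) : f.IsPure := by
  intro M _ _
  letI := f.toAlgebra
  intro m m' h
  set g : M ⊗[S] T →ₗ[S] M :=
    (TensorProduct.rid S M).toLinearMap.comp (LinearMap.lTensor M r) with hg
  have key : ∀ m : M, g (m ⊗ₜ[S] (1 : T)) = m := by
    intro m
    show (TensorProduct.rid S M) ((LinearMap.lTensor M r) (m ⊗ₜ[S] (1 : T))) = m
    rw [LinearMap.lTensor_tmul, hr, TensorProduct.rid_tmul, one_smul]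
  have h2 : g (m ⊗ₜ[S] (1 : T)) = g (m' ⊗ₜ[S] (1 : T)) := congrArg g h
  rw [key, key] at h2
  exact h2

lemma ringHom_finite_of_module {R S : Type u} [CommRing R] [CommRing S] [Algebra R S]
    [h : Module.Finite R S] : (algebraMap R S).Finite := by
  have he : (algebraMap R S).toAlgebra = ‹Algebra R S› :=
    Algebra.algebra_ext _ _ fun r => rfl
  show letI := (algebraMap R S).toAlgebra; Module.Finite R S
  rw [he]
  exact h

lemma NoZeroSMulDivisors.of_algebraMap_injective {R A : Type*} [CommRing R] [Ring A]
    [Algebra R A] [NoZeroDivisors A] (h : Function.Injective (algebraMap R A)) :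
    NoZeroSMulDivisors R A :=
  ⟨fun {c x} hcx => by
    rw [Algebra.smul_def, mul_eq_zero] at hcx
    exact hcx.imp_left fun hc => h (by rw [hc, map_zero])⟩

open nonZeroDivisors in
/-- For a finite injective extension of domains `A → B` with `A` integrally closed containing
`ℚ`, there is an `A`-linear retraction `B → A` sending `1` to `1`, given by the
normalized trace. -/
lemma exists_retraction (A B : Type u) [CommRing A] [CommRing B] [IsDomain A] [IsDomain B]
    [Algebra ℚ A] [IsIntegrallyClosed A] [Algebra A B] [Module.Finite A B]
    [NoZeroSMulDivisors A B] :
    ∃ r : B →ₗ[A] A, r 1 = 1 := by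
  classical
  set K := FractionRing A
  set L := FractionRing B
  letI : Algebra K L := FractionRing.liftAlgebra A L
  haveI : IsScalarTower A K L := FractionRing.isScalarTower_liftAlgebra A L
  haveI : NoZeroSMulDivisors K L :=
    NoZeroSMulDivisors.of_algebraMap_injective (algebraMap K L).injective
  -- every element of B is integral over A
  have hint : ∀ b : B, IsIntegral A (algebraMap B L b) := fun b =>
    (IsIntegral.of_finite A b).algebraMap
  -- L is finite dimensional over K
  haveI hfd : FiniteDimensional K L := by
    obtain ⟨s, hs⟩ := Module.finite_def.mp ‹Module.Finite A B›
    set E : Subalgebra K L := Algebra.adjoin K (algebraMap B L '' (s : Set B)) with hE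
    haveI hEfd : FiniteDimensional K E :=
      ⟨(Submodule.fg_top _).mpr (fg_adjoin_of_finite (s.finite_toSet.image _)
        (fun x hx => by
          obtain ⟨b, _, rfl⟩ := hx
          exact (hint b).tower_top))⟩
    have hBE : ∀ b : B, algebraMap B L b ∈ E := by
      intro b
      have hadj : b ∈ Algebra.adjoin A (s : Set B) := by
        have hb : b ∈ Submodule.span A (s : Set B) := hs ▸ Submodule.mem_top
        have h2 : Submodule.span A (s : Set B) ≤
            Subalgebra.toSubmodule (Algebra.adjoin A (s : Set B)) :=
          Submodule.span_le.mpr Algebra.subset_adjoin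
        exact h2 hb
      have : algebraMap B L b ∈ (Algebra.adjoin A ((s : Set B))).map
          (IsScalarTower.toAlgHom A B L) := ⟨b, hadj, rfl⟩
      rw [AlgHom.map_adjoin] at this
      have hle : Algebra.adjoin A ((IsScalarTower.toAlgHom A B L) '' (s : Set B)) ≤
          E.restrictScalars A := Algebra.adjoin_le (fun x hx => by
        apply Algebra.subset_adjoin
        simpa using hx)
      exact hle this
    have hEtop : E = ⊤ := by
      rw [eq_top_iff]
      intro z _
      obtain ⟨x, y, hy, hz⟩ := IsFractionRing.div_surjective (A := B) z
      rw [← hz]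
      have hx : algebraMap B L x ∈ E := hBE x
      have hyE : algebraMap B L y ∈ E := hBE y
      have hinv : (algebraMap B L y)⁻¹ ∈ E := by
        have := Subalgebra.inv_mem_of_algebraic (A := E) (x := ⟨algebraMap B L y, hyE⟩)
          ((hint y).tower_top (A := K)).isAlgebraic
        simpa using this
      rw [div_eq_mul_inv]
      exact E.mul_mem hx hinv
    have hsurj : Function.Surjective ((Subalgebra.val E).toLinearMap) := by
      intro z
      exact ⟨⟨z, hEtop ▸ trivial⟩, rfl⟩
    exact FiniteDimensional.of_surjective (Subalgebra.val E).toLinearMap hsurj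
  -- the trace map B → K
  set t : B →ₗ[A] K :=
    ((Algebra.trace K L).restrictScalars A).comp (IsScalarTower.toAlgHom A B L).toLinearMap with ht
  have htmem : ∀ b : B, ∃ a : A, algebraMap A K a = t b := by
    intro b
    exact IsIntegrallyClosed.isIntegral_iff.mp (Algebra.isIntegral_trace (hint b))
  -- descend t to an A-linear map B → A
  set ι : A →ₗ[A] K := Algebra.linearMap A K with hι
  have hinj : Function.Injective ι := IsFractionRing.injective A K
  set e : A ≃ₗ[A] LinearMap.range ι := LinearEquiv.ofInjective ι hinj with he
  set t' : B →ₗ[A] LinearMap.range ι :=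
    t.codRestrict (LinearMap.range ι) (fun b => by
      obtain ⟨a, ha⟩ := htmem b; exact ⟨a, ha⟩) with ht'
  set r₀ : B →ₗ[A] A := e.symm.toLinearMap.comp t' with hr₀def
  have hr₀ : ∀ b : B, algebraMap A K (r₀ b) = t b := by
    intro b
    have h1 : (e (e.symm (t' b)) : K) = (t' b : K) := by rw [e.apply_symm_apply]
    have h2 : (e (e.symm (t' b)) : K) = ι (e.symm (t' b)) := rfl
    have h3 : (t' b : K) = t b := rfl
    have : ι (e.symm (t' b)) = t b := by rw [← h2, h1, h3]
    exact this
  set n := Module.finrank K L with hn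
  have hnpos : 0 < n := Module.finrank_pos
  have ht1 : t 1 = algebraMap A K (n : A) := by
    have : (IsScalarTower.toAlgHom A B L).toLinearMap 1 = algebraMap K L 1 := by simp
    show Algebra.trace K L ((IsScalarTower.toAlgHom A B L).toLinearMap 1) = _
    rw [this, Algebra.trace_algebraMap, map_natCast]
    simp
    rfl
  have hr₀1 : r₀ 1 = (n : A) := by
    apply IsFractionRing.injective A K
    rw [hr₀, ht1]
  refine ⟨{ toFun := fun b => ((n : ℚ)⁻¹) • r₀ b
            map_add' := fun x y => by simp only [map_add, smul_add]
            map_smul' := fun a x => by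
              simp only [map_smul, RingHom.id_apply]
              rw [smul_comm] }, ?_⟩
  show ((n : ℚ)⁻¹) • r₀ 1 = 1
  rw [hr₀1, show ((n : A) : A) = (n : ℚ) • (1 : A) by
    rw [Algebra.smul_def, mul_one, map_natCast], smul_smul,
    inv_mul_cancel₀ (by exact_mod_cast hnpos.ne'), one_smul]

theorem isSplinter_iff_isIntegrallyClosed_of_charZero
    (S : Type u) [CommRing S] [IsDomain S] [Algebra ℚ S] :
    IsSplinter S ↔ IsIntegrallyClosed S := by
  constructor
  · -- splinter → integrally closed
    intro hs
    rw [isIntegrallyClosed_iff (FractionRing S)]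
    intro x hx
    let K : Type u := FractionRing S
    let T : Subalgebra S K := Algebra.adjoin S ({x} : Set K)
    haveI hTfin : Module.Finite S T := ⟨(Submodule.fg_top _).mpr hx.fg_adjoin_singleton⟩
    let f : S →+* T := algebraMap S T
    have hfin : f.Finite := ringHom_finite_of_module
    have hfinj : Function.Injective f := by
      intro a b hab
      have : algebraMap S K a = algebraMap S K b := by
        rw [IsScalarTower.algebraMap_apply S T K, IsScalarTower.algebraMap_apply S T K]
        exact congrArg (algebraMap T K) hab
      exact IsFractionRing.injective S K this
    haveI : Algebra.IsIntegral S T := Algebra.IsIntegral.of_finite S T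
    have hsurj : Function.Surjective (PrimeSpectrum.comap f) := by
      intro p
      haveI := p.2
      obtain ⟨Q, hQprime, hQ⟩ := Ideal.exists_ideal_over_prime_of_isIntegral_of_isDomain
        (S := T) p.asIdeal (by
          intro a ha
          have ha' : f a = 0 := ha
          rw [hfinj.eq_iff' (map_zero f)] at ha'
          exact ha' ▸ p.asIdeal.zero_mem)
      exact ⟨⟨Q, hQprime⟩, PrimeSpectrum.ext hQ⟩
    have hpure : f.IsPure := hs T _ f hfin hsurj
    obtain ⟨⟨a, b⟩, hab⟩ := IsLocalization.mk'_surjective (nonZeroDivisors S) x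
    let y : T := ⟨x, Algebra.self_mem_adjoin_singleton S x⟩
    have hkey : f a = f (b : S) * y := by
      apply Subtype.ext
      show algebraMap S K a = algebraMap S K (b : S) * x
      rw [← hab, mul_comm]
      exact (IsLocalization.mk'_spec K a b).symm
    obtain ⟨s, hs'⟩ := Ideal.mem_span_singleton'.mp (pure_key f hpure a (b : S) y hkey)
    refine ⟨s, ?_⟩
    have hb0 : algebraMap S K (b : S) ≠ 0 :=
      IsFractionRing.to_map_ne_zero_of_mem_nonZeroDivisors b.2
    apply mul_right_cancel₀ hb0
    rw [← map_mul, hs', ← hab]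
    exact (IsLocalization.mk'_spec K a b).symm
  · -- integrally closed → splinter
    intro hic T _ f hfin hsurj
    letI := f.toAlgebra
    haveI : Module.Finite S T := hfin
    obtain ⟨q, hq⟩ := hsurj ⟨⊥, Ideal.bot_prime⟩
    haveI := q.2
    have hcomap : q.asIdeal.comap f = ⊥ := congrArg PrimeSpectrum.asIdeal hq
    haveI : IsDomain (T ⧸ q.asIdeal) := Ideal.Quotient.isDomain q.asIdeal
    have hinj : Function.Injective (algebraMap S (T ⧸ q.asIdeal)) := by
      rw [injective_iff_map_eq_zero]
      intro a ha
      have h1 : algebraMap S (T ⧸ q.asIdeal) a = Ideal.Quotient.mk q.asIdeal (f a) := by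
        rw [IsScalarTower.algebraMap_apply S T (T ⧸ q.asIdeal)]
        rfl
      rw [h1, Ideal.Quotient.eq_zero_iff_mem] at ha
      have : a ∈ q.asIdeal.comap f := ha
      rw [hcomap] at this
      exact Ideal.mem_bot.mp this
    haveI : NoZeroSMulDivisors S (T ⧸ q.asIdeal) :=
      NoZeroSMulDivisors.of_algebraMap_injective hinj
    haveI : Module.Finite S (T ⧸ q.asIdeal) :=
      Module.Finite.of_surjective (Ideal.Quotient.mkₐ S q.asIdeal).toLinearMap
        Ideal.Quotient.mk_surjective
    obtain ⟨r, hr1⟩ := exists_retraction S (T ⧸ q.asIdeal)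
    refine isPure_of_retraction f (r.comp (Ideal.Quotient.mkₐ S q.asIdeal).toLinearMap) ?_
    show r ((Ideal.Quotient.mkₐ S q.asIdeal) 1) = 1
    rw [map_one, hr1]
end

section
/- Let S be a Noetherian local splinter of prime characteristic p. Then S is F-pure, i.e., the Frobenius endomorphism F : S → S is pure. -/
universe u

open TensorProduct Module in
theorem exists_fg_subalgebra_tmul_one_eq_zero {R N : Type u} [CommRing R] [CommRing N]
    [Algebra R N] (M : Type u) [AddCommGroup M] [Module R M] (m : M)
    (hm : (m ⊗ₜ[R] (1 : N) : M ⊗[R] N) = 0) :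
    ∃ A : Subalgebra R N, A.FG ∧ (m ⊗ₜ[R] (1 : A) : M ⊗[R] A) = 0 := by
  classical
  let ι := {A : Subalgebra R N // A.FG}
  haveI : Nonempty ι := ⟨⟨⊥, Subalgebra.fg_bot⟩⟩
  have hsup : ∀ A B : Subalgebra R N, A.FG → B.FG → (A ⊔ B).FG := by
    intro A B hA hB
    rw [Subalgebra.fg_def] at hA hB ⊢
    obtain ⟨s, hs, rfl⟩ := hA
    obtain ⟨t, ht, rfl⟩ := hB
    exact ⟨s ∪ t, hs.union ht, Algebra.adjoin_union s t⟩
  haveI : IsDirected ι (· ≤ ·) :=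
    ⟨fun A B => ⟨⟨A.1 ⊔ B.1, hsup _ _ A.2 B.2⟩, show A.1 ≤ A.1 ⊔ B.1 from le_sup_left, show B.1 ≤ A.1 ⊔ B.1 from le_sup_right⟩⟩
  let G : ι → Type u := fun A => ↥A.1
  let f : ∀ (A B : ι), A ≤ B → G A →ₗ[R] G B := fun A B h =>
    (Subalgebra.inclusion h).toLinearMap
  haveI : DirectedSystem G (fun A B h => f A B h) := ⟨fun _ _ => rfl, by intro i j k hij hjk x; rfl⟩
  let φ : Module.DirectLimit G f →ₗ[R] N :=
    Module.DirectLimit.lift R ι G f (fun A => A.1.val.toLinearMap) (fun _ _ _ _ => rfl)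
  have hinj : Function.Injective φ := by
    rw [injective_iff_map_eq_zero]
    intro z hz
    obtain ⟨A, x, rfl⟩ := Module.DirectLimit.exists_of z
    rw [show φ _ = _ from Module.DirectLimit.lift_of _ (fun _ _ _ _ => rfl) _] at hz
    rw [show x = 0 from Subtype.ext hz, map_zero]
  have hsurj : Function.Surjective φ := by
    intro n
    refine ⟨Module.DirectLimit.of R ι G f
      ⟨Algebra.adjoin R {n}, Subalgebra.fg_def.mpr ⟨{n}, Set.finite_singleton n, rfl⟩⟩
      ⟨n, Algebra.self_mem_adjoin_singleton R n⟩, ?_⟩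
    exact Module.DirectLimit.lift_of _ (fun _ _ _ _ => rfl) _
  let e : Module.DirectLimit G f ≃ₗ[R] N := LinearEquiv.ofBijective φ ⟨hinj, hsurj⟩
  haveI : DirectedSystem (fun A : ι => M ⊗[R] G A)
      (fun A B h => LinearMap.lTensor M (f A B h)) := by
    constructor
    · intro A x
      rw [show f A A le_rfl = LinearMap.id from rfl, LinearMap.lTensor_id, LinearMap.id_apply]
    · intro A B C hAB hBC x
      rw [← LinearMap.lTensor_comp_apply]
      rfl
  let A₀ : ι := ⟨⊥, Subalgebra.fg_bot⟩
  let x₀ : M ⊗[R] G A₀ := m ⊗ₜ ⟨1, one_mem _⟩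
  have he1 : e (Module.DirectLimit.of R ι G f A₀ ⟨1, one_mem _⟩) = 1 := Module.DirectLimit.lift_of _ (fun _ _ _ _ => rfl) _
  have hE : ((TensorProduct.directLimitRight f M).symm ≪≫ₗ (LinearEquiv.lTensor M e))
      (Module.DirectLimit.of R ι (fun A => M ⊗[R] G A) (fun A B h => LinearMap.lTensor M (f A B h))
        A₀ x₀) = 0 := by
    rw [LinearEquiv.trans_apply,
      show (Module.DirectLimit.of R ι (fun A => M ⊗[R] G A)
          (fun A B h => LinearMap.lTensor M (f A B h)) A₀ x₀)
        = (Module.DirectLimit.of R ι (fun A => M ⊗[R] G A)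
          (fun A B h => LinearMap.lTensor M (f A B h)) A₀ (m ⊗ₜ ⟨1, one_mem _⟩)) from rfl,
      TensorProduct.directLimitRight_symm_of_tmul, LinearEquiv.lTensor_tmul, he1]
    exact hm
  have h0 : Module.DirectLimit.of R ι (fun A => M ⊗[R] G A)
      (fun A B h => LinearMap.lTensor M (f A B h)) A₀ x₀ = 0 := by
    apply ((TensorProduct.directLimitRight f M).symm ≪≫ₗ (LinearEquiv.lTensor M e)).injective
    rw [hE, map_zero]
  obtain ⟨A₁, hle, h1⟩ := Module.DirectLimit.of.zero_exact h0
  refine ⟨A₁.1, A₁.2, ?_⟩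
  rw [show x₀ = m ⊗ₜ ⟨1, one_mem _⟩ from rfl, LinearMap.lTensor_tmul] at h1
  exact h1


open TensorProduct in
theorem frobenius_isPure_of_isSplinter (p : ℕ) [Fact p.Prime]
    (S : Type u) [CommRing S] [IsLocalRing S] [IsNoetherianRing S] [CharP S p]
    (hS : IsSplinter S) : (frobenius S p).IsPure := by
  intro M _ _
  letI alg := (frobenius S p).toAlgebra
  letI : Module S S := alg.toModule
  show Function.Injective (fun m : M => (m ⊗ₜ[S] (1 : S) : M ⊗[S] S))
  have key : ∀ m : M, (m ⊗ₜ[S] (1 : S) : M ⊗[S] S) = 0 → m = 0 := by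
    intro m hm
    obtain ⟨A, hA, hm0⟩ := exists_fg_subalgebra_tmul_one_eq_zero M m hm
    haveI : Algebra.IsIntegral S ↥A := by
      constructor
      intro x
      refine ⟨Polynomial.X ^ p - Polynomial.C (x : S),
        Polynomial.monic_X_pow_sub_C _ (Nat.Prime.ne_zero Fact.out), ?_⟩
      rw [Polynomial.eval₂_sub, Polynomial.eval₂_X_pow, Polynomial.eval₂_C, sub_eq_zero]
      refine (Subtype.ext ?_).symm
      show (x : S) ^ p = frobenius S p (x : S)
      rw [frobenius_def]
    haveI : Algebra.FiniteType S ↥A := ⟨(Subalgebra.fg_top A).mpr hA⟩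
    haveI hMF : Module.Finite S ↥A := Algebra.IsIntegral.finite
    have hfin : (algebraMap S ↥A).Finite := hMF
    have h1 : Function.Surjective (PrimeSpectrum.comap (frobenius S p)) := by
      intro q
      refine ⟨q, ?_⟩
      apply PrimeSpectrum.ext
      ext x
      show frobenius S p x ∈ q.asIdeal ↔ x ∈ q.asIdeal
      rw [frobenius_def]
      exact q.isPrime.pow_mem_iff_mem p (Nat.Prime.pos Fact.out)
    have h2 : (A.val.toRingHom).comp (algebraMap S ↥A) = frobenius S p := rfl
    have h3 : Function.Surjective
        (PrimeSpectrum.comap (A.val.toRingHom.comp (algebraMap S ↥A))) := by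
      rw [h2]; exact h1
    rw [PrimeSpectrum.comap_comp] at h3
    have hspec : Function.Surjective (PrimeSpectrum.comap (algebraMap S ↥A)) :=
      Function.Surjective.of_comp h3
    have hp := hS ↥A inferInstance (algebraMap S ↥A) hfin hspec M ‹_› ‹_›
    exact hp (show _ = _ by rw [show ((fun m : M => (m ⊗ₜ[S] (1 : ↥A) : M ⊗[S] ↥A)) 0) = 0 by simp]; exact hm0)
  intro a b hab
  have : a - b = 0 := key _ (by rw [TensorProduct.sub_tmul, show (a ⊗ₜ[S] (1:S) : M ⊗[S] S) = b ⊗ₜ[S] 1 from hab, sub_self])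
  exact sub_eq_zero.mp this
end
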